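/- In the Lie coalgebra with structure equations de¹ = de² = de⁴ = de⁵ = de⁶ = 0 and de³ = e²∧e⁴ + e¹∧e⁵, the 2-form ω̌ = e¹∧e⁴ + e²∧e⁵ + e³∧e⁶ satisfies d(ω̌²) = 0, and the complex 3-form Ω̌ = (e¹+ie⁴)∧(e²+ie⁵)∧(e³+ie⁶) satisfies dΩ̌ = 0. -/

import Mathlib

/-!
Both forms are products of 1-forms and `d` is a derivation, so everything reduces to
`de³ = e²∧e⁴ + e¹∧e⁵`, the only non-zero differential.

Since 2-forms are central, `d(ω̌²) = 2 ω̌∧dω̌ = 2 ω̌∧de³∧e⁶`, and every term of this product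
repeats some `eᵏ`.

With `θᵏ = eᵏ + i eᵏ⁺³`, only `θ³` is not closed, so `dΩ̌ = θ¹∧θ²∧de³`; but
`2i de³ = θ̄¹∧θ² - θ¹∧θ̄²`, so every term repeats `θ¹` or `θ²`.
-/

open ExteriorAlgebra Complex

/-- Basis 1-forms e¹,…,e⁶ (indexed 0,…,5) of the complexified exterior algebra. -/
noncomputable def e (i : Fin 6) : ExteriorAlgebra ℂ (Fin 6 → ℂ) :=
  ExteriorAlgebra.ι ℂ (Pi.single i 1)

namespace ExteriorAlgebra

variable {R M : Type*} [CommRing R] [AddCommGroup M] [Module R M]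

theorem ι_mul_ι_anticomm (x y : M) : ι R x * ι R y = -(ι R y * ι R x) :=
  eq_neg_of_add_eq_zero_left (ι_add_mul_swap x y)

theorem ι_mul_ι_mul_ι_self (x y : M) : ι R x * ι R y * ι R x = 0 := by
  rw [ι_mul_ι_anticomm x y, neg_mul, mul_assoc, ι_sq_zero, mul_zero, neg_zero]

theorem mul_ι_mul_ι_mul_ι_self (a : ExteriorAlgebra R M) (x y : M) :
    a * ι R x * ι R y * ι R x = 0 := by
  rw [mul_assoc a, mul_assoc a, ι_mul_ι_mul_ι_self, mul_zero]

theorem commute_ι_mul_ι (x y : M) (a : ExteriorAlgebra R M) : Commute (ι R x * ι R y) a := by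
  induction a using ExteriorAlgebra.induction with
  | algebraMap r => exact (Algebra.commutes r _).symm
  | ι z =>
    change _ * _ = _ * _
    rw [mul_assoc, ι_mul_ι_anticomm y z, mul_neg, ← mul_assoc, ι_mul_ι_anticomm x z, neg_mul,
      neg_neg, mul_assoc]
  | mul a b ha hb => exact ha.mul_right hb
  | add a b ha hb => exact ha.add_right hb

theorem map_ι_mul_ι_mul {d : ExteriorAlgebra R M →ₗ[R] ExteriorAlgebra R M}
    (hder : ∀ x ω, d (ι R x * ω) = d (ι R x) * ω - ι R x * d ω) (x y : M)
    (ω : ExteriorAlgebra R M) :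
    d (ι R x * ι R y * ω) = d (ι R x * ι R y) * ω + ι R x * ι R y * d ω := by
  rw [mul_assoc, hder, hder, hder x]
  noncomm_ring

end ExteriorAlgebra

section H3

variable {d : ExteriorAlgebra ℂ (Fin 6 → ℂ) →ₗ[ℂ] ExteriorAlgebra ℂ (Fin 6 → ℂ)}

theorem map_omega_mul_omega_eq_zero
    (hder : ∀ (x : Fin 6 → ℂ) (ω : ExteriorAlgebra ℂ (Fin 6 → ℂ)),
      d (ι ℂ x * ω) = d (ι ℂ x) * ω - ι ℂ x * d ω)
    (h1 : d (e 0) = 0) (h2 : d (e 1) = 0) (h3 : d (e 2) = e 1 * e 3 + e 0 * e 4)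
    (h4 : d (e 3) = 0) (h5 : d (e 4) = 0) (h6 : d (e 5) = 0) :
    d ((e 0 * e 3 + e 1 * e 4 + e 2 * e 5) * (e 0 * e 3 + e 1 * e 4 + e 2 * e 5)) = 0 := by
  have hleib : ∀ i j ω, d (e i * e j * ω) = d (e i * e j) * ω + e i * e j * d ω :=
    fun i j => map_ι_mul_ι_mul hder _ _
  have hde : ∀ i j, d (e i * e j) = d (e i) * e j - e i * d (e j) := fun i j => hder _ _
  have hcomm : ∀ i j a, Commute (e i * e j) a := fun i j => commute_ι_mul_ι _ _
  set τ := e 0 * e 3 + e 1 * e 4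
  set ρ := e 1 * e 3 + e 0 * e 4
  set σ := τ + e 2 * e 5
  have hdσ : d σ = ρ * e 5 := by
    rw [map_add, map_add, hde, hde, hde, h1, h2, h3, h4, h5, h6]
    noncomm_ring
  have hτρ : τ * ρ = 0 := by
    simp only [τ, ρ, e, add_mul, mul_add, ← mul_assoc, ι_mul_ι_mul_ι_self,
      mul_ι_mul_ι_mul_ι_self, zero_mul, add_zero]
  have hρ5 : e 5 * ρ * e 5 = 0 := by
    have h55 : e 5 * e 5 = 0 := ι_sq_zero _
    rw [← ((hcomm 1 3 _).add_left (hcomm 0 4 _)).eq, mul_assoc, h55, mul_zero]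
  calc d (σ * σ) = d σ * σ + σ * d σ := by
        simp only [σ, τ, add_mul, map_add, hleib]; abel
    _ = 2 • (σ * (ρ * e 5)) := by
        rw [hdσ, (((hcomm 0 3 _).add_left (hcomm 1 4 _)).add_left (hcomm 2 5 _)).eq, two_smul]
    _ = 0 := by
        rw [add_mul, ← mul_assoc, hτρ, zero_mul, zero_add, mul_assoc, ← mul_assoc (e 5), hρ5,
          mul_zero, smul_zero]

theorem map_Omega_eq_zero
    (hder : ∀ (x : Fin 6 → ℂ) (ω : ExteriorAlgebra ℂ (Fin 6 → ℂ)),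
      d (ι ℂ x * ω) = d (ι ℂ x) * ω - ι ℂ x * d ω)
    (h1 : d (e 0) = 0) (h2 : d (e 1) = 0) (h3 : d (e 2) = e 1 * e 3 + e 0 * e 4)
    (h4 : d (e 3) = 0) (h5 : d (e 4) = 0) (h6 : d (e 5) = 0) :
    d ((e 0 + I • e 3) * (e 1 + I • e 4) * (e 2 + I • e 5)) = 0 := by
  have hθ : ∀ i j, e i + I • e j = ι ℂ (Pi.single i 1 + I • Pi.single j 1) := by
    simp [e]
  have hθ' : ∀ i j, e i - I • e j = ι ℂ (Pi.single i 1 - I • Pi.single j 1) := by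
    simp [e]
  have hdθ : ∀ i j, d (e i + I • e j) = d (e i) + I • d (e j) := by simp
  have hdΩ : d ((e 0 + I • e 3) * (e 1 + I • e 4) * (e 2 + I • e 5)) =
      (e 0 + I • e 3) * (e 1 + I • e 4) * (e 1 * e 3 + e 0 * e 4) := by
    rw [hθ 0 3, hθ 1 4, map_ι_mul_ι_mul hder, hder, ← hθ, ← hθ, hdθ, hdθ, hdθ,
      h1, h2, h3, h4, h5, h6]
    simp
  have hde₂ : (2 * I) • (e 1 * e 3 + e 0 * e 4) =
      (e 0 - I • e 3) * (e 1 + I • e 4) - (e 0 + I • e 3) * (e 1 - I • e 4) := by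
    have h31 : e 3 * e 1 = -(e 1 * e 3) := ι_mul_ι_anticomm _ _
    simp only [mul_add, add_mul, mul_sub, sub_mul, smul_mul_assoc, mul_smul_comm, h31]
    module
  have h2I : (2 * I : ℂ) ≠ 0 := by simp
  rw [hdΩ, ← smul_eq_zero_iff_right h2I, ← mul_smul_comm, hde₂, hθ, hθ, hθ', hθ', mul_sub,
    ← mul_assoc, ← mul_assoc, mul_ι_mul_ι_mul_ι_self, ι_mul_ι_mul_ι_self, zero_mul, sub_zero]

end H3

theorem stmt14_general
    (d : ExteriorAlgebra ℂ (Fin 6 → ℂ) →ₗ[ℂ] ExteriorAlgebra ℂ (Fin 6 → ℂ))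
    (hder : ∀ (x : Fin 6 → ℂ) (ω : ExteriorAlgebra ℂ (Fin 6 → ℂ)),
      d (ExteriorAlgebra.ι ℂ x * ω) = d (ExteriorAlgebra.ι ℂ x) * ω -
        ExteriorAlgebra.ι ℂ x * d ω)
    (h1 : d (e 0) = 0) (h2 : d (e 1) = 0)
    (h3 : d (e 2) = e 1 * e 3 + e 0 * e 4)
    (h4 : d (e 3) = 0) (h5 : d (e 4) = 0) (h6 : d (e 5) = 0) :
    d ((e 0 * e 3 + e 1 * e 4 + e 2 * e 5) * (e 0 * e 3 + e 1 * e 4 + e 2 * e 5)) = 0 ∧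
      d ((e 0 + Complex.I • e 3) * (e 1 + Complex.I • e 4) * (e 2 + Complex.I • e 5)) = 0 :=
  ⟨map_omega_mul_omega_eq_zero hder h1 h2 h3 h4 h5 h6, map_Omega_eq_zero hder h1 h2 h3 h4 h5 h6⟩

/-- In the Lie coalgebra with de¹ = de² = de⁴ = de⁵ = de⁶ = 0 and de³ = e²∧e⁴ + e¹∧e⁵
(the nilpotent Lie algebra 𝔥₃), ω̌ = e¹∧e⁴ + e²∧e⁵ + e³∧e⁶ satisfies d(ω̌²) = 0 and
Ω̌ = (e¹+ie⁴)∧(e²+ie⁵)∧(e³+ie⁶) satisfies dΩ̌ = 0. -/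
theorem stmt14
    (d : ExteriorAlgebra ℂ (Fin 6 → ℂ) →ₗ[ℂ] ExteriorAlgebra ℂ (Fin 6 → ℂ))
    (hone : d 1 = 0)
    (hder : ∀ (x : Fin 6 → ℂ) (ω : ExteriorAlgebra ℂ (Fin 6 → ℂ)),
      d (ExteriorAlgebra.ι ℂ x * ω) = d (ExteriorAlgebra.ι ℂ x) * ω -
        ExteriorAlgebra.ι ℂ x * d ω)
    (h1 : d (e 0) = 0) (h2 : d (e 1) = 0)
    (h3 : d (e 2) = e 1 * e 3 + e 0 * e 4)
    (h4 : d (e 3) = 0) (h5 : d (e 4) = 0) (h6 : d (e 5) = 0) :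
    d ((e 0 * e 3 + e 1 * e 4 + e 2 * e 5) * (e 0 * e 3 + e 1 * e 4 + e 2 * e 5)) = 0 ∧
      d ((e 0 + Complex.I • e 3) * (e 1 + Complex.I • e 4) * (e 2 + Complex.I • e 5)) = 0 :=
  stmt14_general d hder h1 h2 h3 h4 h5 h6
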